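/- Every element of OR(G) can be realized by rank-one projections and a pure state: if f(x) = Tr(U_x F) > 0 for all x, for projections {U_x} representing G and density operator F, then there exist unit vectors {w_x} with ⟨w_x|w_{x'}⟩ = 0 for distinct non-adjacent x, x', and a unit vector ψ, such that f(x) = |⟨w_x|ψ⟩|² for all x. -/

import Mathlib

/-!
The purification of `F` is `ψ = vec √F ∈ ℂ^d ⊗ ℂ^d`, and `U_x` acts on the first factor by
`vec A ↦ vec (U_x A)`. Since `⟨vec A, vec B⟩ = Tr (Aᴴ B)`, the vectors `vec (U_x √F)` satisfy
`⟨vec (U_x √F), vec (U_{x'} √F)⟩ = Tr (U_x U_{x'} F)` and `⟨vec (U_x √F), ψ⟩ = Tr (U_x F) = f x`: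
they are orthogonal whenever `U_x U_{x'} = 0` and have squared norm `f x`. Normalizing them by
`√(f x)` gives the unit vectors `w_x` with `|⟨w_x, ψ⟩|² = f x`.
-/

open Matrix
open scoped ComplexOrder

noncomputable def IsDensity {d : ℕ} (A : Matrix (Fin d) (Fin d) ℂ) : Prop :=
  A.PosSemidef ∧ A.trace = 1

noncomputable def dotc {Z : Type*} [Fintype Z] (u v : Z → ℂ) : ℂ :=
  ∑ p, star (u p) * v p

section dotc

variable {Z : Type*} [Fintype Z]

lemma ofReal_sum_normSq_eq_dotc_self (u : Z → ℂ) :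
    ((∑ i, Complex.normSq (u i) : ℝ) : ℂ) = dotc u u := by
  push_cast
  exact Finset.sum_congr rfl fun i _ => Complex.normSq_eq_conj_mul_self

lemma dotc_self_eq_ofReal_re (u : Z → ℂ) : dotc u u = ((dotc u u).re : ℂ) := by
  rw [← ofReal_sum_normSq_eq_dotc_self, Complex.ofReal_re]

lemma dotc_smul_left (a : ℂ) (u v : Z → ℂ) : dotc (a • u) v = star a * dotc u v := by
  simp only [dotc, Finset.mul_sum, Pi.smul_apply, smul_eq_mul, star_mul', mul_assoc]

lemma dotc_smul_right (b : ℂ) (u v : Z → ℂ) : dotc u (b • v) = b * dotc u v := by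
  simp only [dotc, Finset.mul_sum, Pi.smul_apply, smul_eq_mul, mul_left_comm]

lemma dotc_inv_sqrt_smul_self {u : Z → ℂ} {c : ℝ} (hc : 0 < c) (hu : dotc u u = c) :
    dotc ((((√c)⁻¹ : ℝ) : ℂ) • u) ((((√c)⁻¹ : ℝ) : ℂ) • u) = 1 := by
  rw [dotc_smul_left, dotc_smul_right, hu, Complex.star_def, Complex.conj_ofReal]
  have hsqrt : (√c)⁻¹ * ((√c)⁻¹ * c) = 1 := by
    rw [← mul_assoc, ← mul_inv, Real.mul_self_sqrt hc.le, inv_mul_cancel₀ hc.ne']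
  exact_mod_cast hsqrt

lemma normSq_dotc_inv_sqrt_smul {u ψ : Z → ℂ} {c : ℝ} (hc : 0 ≤ c) (hu : dotc u ψ = c) :
    Complex.normSq (dotc ((((√c)⁻¹ : ℝ) : ℂ) • u) ψ) = c := by
  rw [dotc_smul_left, hu, Complex.star_def, Complex.conj_ofReal, ← Complex.ofReal_mul,
    Complex.normSq_ofReal]
  obtain rfl | hc := hc.eq_or_lt
  · simp
  · field_simp
    rw [Real.sq_sqrt hc.le]

end dotc

/-- The vectorization `vec A` of a square matrix, in `ℂ^d ⊗ ℂ^d ≅ ℂ^(d*d)`. -/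
def vecMat {d : ℕ} (A : Matrix (Fin d) (Fin d) ℂ) : Fin (d * d) → ℂ :=
  fun k => A (finProdFinEquiv.symm k).1 (finProdFinEquiv.symm k).2

lemma dotc_vecMat {d : ℕ} (A B : Matrix (Fin d) (Fin d) ℂ) :
    dotc (vecMat A) (vecMat B) = (Aᴴ * B).trace := by
  rw [dotc, ← finProdFinEquiv.sum_comp]
  simp only [vecMat, Equiv.symm_apply_apply, Fintype.sum_prod_type, trace, diag, mul_apply,
    conjTranspose_apply]
  exact Finset.sum_comm

lemma trace_conjTranspose_mul_mul_mul_self {n R : Type*} [Fintype n] [CommRing R]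
    [StarRing R] {P S : Matrix n n R} (hP : P.IsHermitian) (hS : S.IsHermitian)
    (Q : Matrix n n R) :
    ((P * S)ᴴ * (Q * S)).trace = (P * Q * (S * S)).trace := by
  rw [conjTranspose_mul, hP.eq, hS.eq, Matrix.mul_assoc, trace_mul_comm, Matrix.mul_assoc,
    Matrix.mul_assoc, Matrix.mul_assoc]

lemma Matrix.PosSemidef.exists_isHermitian_mul_self_eq {n : Type*} [Fintype n] [DecidableEq n]
    {F : Matrix n n ℂ} (hF : F.PosSemidef) : ∃ S : Matrix n n ℂ, S.IsHermitian ∧ S * S = F := by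
  open MatrixOrder in
  exact ⟨CFC.sqrt F, (CFC.sqrt_nonneg F).posSemidef.1, CFC.sqrt_mul_sqrt_self F hF.nonneg⟩

/-- every element of `OR(G)` with strictly positive values can be
realized by rank-one projections and a pure state: if `f(x) = Tr(U_x F) > 0` for a
projection representation `{U_x}` of `G` and a density operator `F`, then there are
unit vectors `{w_x}` (orthogonal for distinct non-adjacent vertices) and a unit
vector `ψ` with `f(x) = |⟨w_x|ψ⟩|²` for all `x`. -/
theorem ORset_rank_one_realization {X : Type*} [Fintype X] (G : SimpleGraph X)
    {d : ℕ} (U : X → Matrix (Fin d) (Fin d) ℂ)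
    (hU : ∀ x, (U x).IsHermitian ∧ U x * U x = U x)
    (hrep : ∀ x x', x ≠ x' → ¬ G.Adj x x' → U x * U x' = 0)
    (F : Matrix (Fin d) (Fin d) ℂ) (hF : IsDensity F)
    (f : X → ℝ) (hf : ∀ x, f x = ((U x * F).trace.re))
    (hpos : ∀ x, 0 < f x) :
    ∃ d' : ℕ, ∃ w : X → Fin d' → ℂ, ∃ ψ : Fin d' → ℂ,
      (∀ x, ∑ i, Complex.normSq (w x i) = 1) ∧
      (∑ i, Complex.normSq (ψ i) = 1) ∧
      (∀ x x', x ≠ x' → ¬ G.Adj x x' → dotc (w x) (w x') = 0) ∧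
      (∀ x, f x = Complex.normSq (dotc (w x) ψ)) := by
  obtain ⟨S, hS, hSS⟩ := hF.1.exists_isHermitian_mul_self_eq
  have hvec : ∀ {P} (Q : Matrix (Fin d) (Fin d) ℂ), P.IsHermitian →
      dotc (vecMat (P * S)) (vecMat (Q * S)) = (P * Q * F).trace := fun Q hP => by
    rw [dotc_vecMat, trace_conjTranspose_mul_mul_mul_self hP hS, hSS]
  set v := fun x => vecMat (U x * S)
  have hψ : vecMat S = vecMat (1 * S) := by rw [Matrix.one_mul]
  have htrace : ∀ x, (U x * F).trace = f x := fun x => by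
    have hvv := hvec (U x) (hU x).1
    rw [(hU x).2] at hvv
    rw [hf, ← hvv, ← dotc_self_eq_ofReal_re]
  have hvv : ∀ x, dotc (v x) (v x) = f x := fun x => by
    rw [hvec (U x) (hU x).1, (hU x).2, htrace]
  have hvψ : ∀ x, dotc (v x) (vecMat S) = f x := fun x => by
    rw [hψ, hvec 1 (hU x).1, Matrix.mul_one, htrace]
  refine ⟨d * d, fun x => (((√(f x))⁻¹ : ℝ) : ℂ) • v x, vecMat S, fun x => ?_, ?_,
    fun x x' hne hnadj => ?_, fun x => (normSq_dotc_inv_sqrt_smul (hpos x).le (hvψ x)).symm⟩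
  · exact_mod_cast (ofReal_sum_normSq_eq_dotc_self _).trans
      (dotc_inv_sqrt_smul_self (hpos x) (hvv x))
  · have hψψ : dotc (vecMat S) (vecMat S) = 1 := by
      rw [hψ, hvec 1 isHermitian_one, Matrix.one_mul, Matrix.one_mul, hF.2]
    exact_mod_cast (ofReal_sum_normSq_eq_dotc_self _).trans hψψ
  · rw [dotc_smul_left, dotc_smul_right, hvec (U x') (hU x).1, hrep x x' hne hnadj,
      Matrix.zero_mul, trace_zero, mul_zero, mul_zero]
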